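/- Let n : ℝ → ℝ be smooth, even, bounded, and bounded away from zero with n(0) > 0, and define η(r) = ∫_0^r √(n(σ)) dσ for r ≥ 0. Then the function r ↦ 1/(r² n(r)) − 1/η(r)², defined for r > 0, has a finite limit as r → 0⁺. In particular, 1/(r² n(r)) − 1/η(r)² is bounded on (0, r₀] for any r₀ > 0. -/

import Mathlib

open Set Filter intervalIntegral

/-- For a smooth even sound profile `n`, bounded and bounded away from zero, with
`η(r) = ∫_0^r √n`, the function `1/(r² n(r)) − 1/η(r)²` has a finite limit as
`r → 0⁺`, and in particular is bounded on `(0, r₀]` for every `r₀ > 0`. -/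
theorem p_m_coefficient_bounded
    (n : ℝ → ℝ) (hn : ContDiff ℝ (⊤ : ℕ∞) n)
    (heven : ∀ r : ℝ, n (-r) = n r)
    (hbdd : ∃ M : ℝ, ∀ r : ℝ, n r ≤ M)
    (hpos : ∃ σ₀ : ℝ, 0 < σ₀ ∧ ∀ r : ℝ, σ₀ ≤ n r)
    (h0 : 0 < n 0) :
    (∃ L : ℝ,
      Filter.Tendsto
        (fun r : ℝ => 1 / (r ^ 2 * n r) - 1 / (∫ σ in (0:ℝ)..r, Real.sqrt (n σ)) ^ 2)
        (nhdsWithin 0 (Set.Ioi 0)) (nhds L)) ∧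
    ∀ r₀ : ℝ, 0 < r₀ → ∃ M : ℝ, ∀ r ∈ Set.Ioc (0:ℝ) r₀,
      |1 / (r ^ 2 * n r) - 1 / (∫ σ in (0:ℝ)..r, Real.sqrt (n σ)) ^ 2| ≤ M := by
  obtain ⟨σ₀, hσ₀, hσ⟩ := hpos
  have hnpos : ∀ r, 0 < n r := fun r => lt_of_lt_of_le hσ₀ (hσ r)
  set φ : ℝ → ℝ := fun r => Real.sqrt (n r) with hφdef
  have hφpos : ∀ r, 0 < φ r := fun r => Real.sqrt_pos.mpr (hnpos r)
  have hφsm : ContDiff ℝ ((⊤ : ℕ∞) : WithTop ℕ∞) φ :=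
    (hn.of_le (by simp)).sqrt (fun r => (hnpos r).ne')
  have hφc : Continuous φ := hφsm.continuous
  have hφdiff : Differentiable ℝ φ := hφsm.differentiable (by simp)
  set p : ℝ → ℝ := deriv φ with hpdef
  have hpsm : ContDiff ℝ ((⊤ : ℕ∞) : WithTop ℕ∞) p := (contDiff_infty_iff_deriv.mp hφsm).2
  have hpdiff : Differentiable ℝ p := hpsm.differentiable (by simp)
  -- φ is even, so p 0 = 0
  have hφeven : ∀ r, φ (-r) = φ r := fun r => by simp [hφdef, heven r]
  have hp0 : p 0 = 0 := by
    have h1 : HasDerivAt φ (p 0) 0 := (hφdiff 0).hasDerivAt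
    have h1' : HasDerivAt φ (p 0) (-0 : ℝ) := by rw [neg_zero]; exact h1
    have h2 : HasDerivAt (fun r => φ (-r)) (-(p 0)) 0 := by
      have h := h1'.comp 0 (hasDerivAt_neg 0)
      simp only [mul_neg, mul_one] at h
      exact h
    have h3 : HasDerivAt φ (-(p 0)) 0 := by
      convert h2 using 2 with r
      · exact (hφeven r).symm
    have := h1.unique h3
    linarith
  set q : ℝ := deriv p 0 with hqdef
  have hq : HasDerivAt p q 0 := (hpdiff 0).hasDerivAt
  have hslope : Tendsto (fun r => p r / r) (nhdsWithin 0 (Set.Ioi 0)) (nhds q) := by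
    have := hasDerivAt_iff_tendsto_slope.mp hq
    have h2 := this.mono_left (nhdsWithin_mono 0 (fun x hx => (ne_of_gt hx : x ≠ 0)))
    refine h2.congr (fun r => ?_)
    simp [slope_def_field, hp0, div_eq_inv_mul]
  set η : ℝ → ℝ := fun r => ∫ σ in (0:ℝ)..r, φ σ with hηdef
  have hηderiv : ∀ r, HasDerivAt η (φ r) r := fun r =>
    (hφc.integral_hasStrictDerivAt 0 r).hasDerivAt
  have hηc : Continuous η := by
    rw [continuous_iff_continuousAt]; exact fun r => (hηderiv r).continuousAt
  have hη0 : η 0 = 0 := by simp [hηdef]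
  have hηpos : ∀ r, 0 < r → 0 < η r := fun r hr =>
    intervalIntegral_pos_of_pos_on (hφc.intervalIntegrable 0 r)
      (fun x _ => hφpos x) hr
  -- η r / r → φ 0
  have hηslope : Tendsto (fun r => η r / r) (nhdsWithin 0 (Set.Ioi 0)) (nhds (φ 0)) := by
    have := hasDerivAt_iff_tendsto_slope.mp (hηderiv 0)
    have h2 := this.mono_left (nhdsWithin_mono 0 (fun x hx => (ne_of_gt hx : x ≠ 0)))
    refine h2.congr (fun r => ?_)
    simp [slope_def_field, hη0, div_eq_inv_mul]
  -- L'Hopital for N r / r^3 where N r = η r - r * φ r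
  set N : ℝ → ℝ := fun r => η r - r * φ r with hNdef
  have hNderiv : ∀ r, HasDerivAt N (-(r * p r)) r := by
    intro r
    have h1 : HasDerivAt (fun u => u * φ u) (1 * φ r + r * p r) r :=
      (hasDerivAt_id r).mul (hφdiff r).hasDerivAt
    have := (hηderiv r).sub h1
    have e : -(r * p r) = φ r - (1 * φ r + r * p r) := by ring
    rw [e]; exact this
  have hNc : Continuous N := hηc.sub (continuous_id.mul hφc)
  have hN0 : N 0 = 0 := by simp [hNdef, hη0]
  have hN3 : Tendsto (fun r => N r / r ^ 3) (nhdsWithin 0 (Set.Ioi 0)) (nhds (-(q / 3))) := by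
    apply HasDerivAt.lhopital_zero_right_on_Ioo (f' := fun x => -(x * p x))
      (g' := fun x => 3 * x ^ 2) one_pos
    · exact fun x _ => hNderiv x
    · intro x _
      have : HasDerivAt (fun u : ℝ => u ^ 3) ((3:ℕ) * x ^ 2) x := by
        simpa using hasDerivAt_pow 3 x
      simpa using this
    · intro x hx
      have : x ≠ 0 := ne_of_gt hx.1
      positivity
    · have := (hNc.tendsto 0).mono_left (nhdsWithin_le_nhds (s := Set.Ioi 0))
      rwa [hN0] at this
    · have : Tendsto (fun r : ℝ => r ^ 3) (nhds 0) (nhds ((0:ℝ) ^ 3)) :=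
        (continuous_pow 3).tendsto 0
      simpa using this.mono_left (nhdsWithin_le_nhds (s := Set.Ioi 0))
    · have : Tendsto (fun r => -(p r / r) / 3) (nhdsWithin 0 (Set.Ioi 0)) (nhds (-(q / 3))) := by
        have := hslope.neg.div_const 3
        simpa [neg_div] using this
      refine this.congr' ?_
      filter_upwards [self_mem_nhdsWithin] with x hx
      have hx0 : (x:ℝ) ≠ 0 := ne_of_gt hx
      field_simp
  -- continuity facts
  have hnφ : ∀ r, n r = φ r ^ 2 := fun r => (Real.sq_sqrt (hnpos r).le).symm
  have hφ0 : Tendsto φ (nhdsWithin 0 (Set.Ioi 0)) (nhds (φ 0)) :=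
    (hφc.tendsto 0).mono_left nhdsWithin_le_nhds
  have hn0 : Tendsto n (nhdsWithin 0 (Set.Ioi 0)) (nhds (n 0)) :=
    (hn.continuous.tendsto 0).mono_left nhdsWithin_le_nhds
  have hden : n 0 * (φ 0) ^ 2 ≠ 0 := by positivity
  set L : ℝ := -(q / 3) * (φ 0 + φ 0) / (n 0 * (φ 0) ^ 2) with hLdef
  have hlim : Tendsto
      (fun r : ℝ => 1 / (r ^ 2 * n r) - 1 / (∫ σ in (0:ℝ)..r, Real.sqrt (n σ)) ^ 2)
      (nhdsWithin 0 (Set.Ioi 0)) (nhds L) := by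
    have T : Tendsto (fun r => N r / r ^ 3 * (η r / r + φ r) / (n r * (η r / r) ^ 2))
        (nhdsWithin 0 (Set.Ioi 0)) (nhds L) :=
      (hN3.mul (hηslope.add hφ0)).div (hn0.mul (hηslope.pow 2)) hden
    refine T.congr' ?_
    filter_upwards [self_mem_nhdsWithin] with r hr
    have hr0 : (r:ℝ) ≠ 0 := ne_of_gt hr
    have hηr : η r ≠ 0 := ne_of_gt (hηpos r hr)
    have hφr : φ r ≠ 0 := ne_of_gt (hφpos r)
    show N r / r ^ 3 * (η r / r + φ r) / (n r * (η r / r) ^ 2)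
        = 1 / (r ^ 2 * n r) - 1 / (η r) ^ 2
    rw [hnφ r, hNdef]
    field_simp
    ring
  refine ⟨⟨L, hlim⟩, fun r₀ hr₀ => ?_⟩
  -- boundedness
  have h1 : ∀ᶠ r in nhdsWithin 0 (Set.Ioi 0),
      dist (1 / (r ^ 2 * n r) - 1 / (∫ σ in (0:ℝ)..r, Real.sqrt (n σ)) ^ 2) L < 1 :=
    Metric.tendsto_nhds.mp hlim 1 one_pos
  rw [eventually_nhdsWithin_iff, Metric.eventually_nhds_iff] at h1
  obtain ⟨δ, hδpos, hδ⟩ := h1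
  set c : ℝ := min δ r₀ with hcdef
  have hcpos : 0 < c := lt_min hδpos hr₀
  have hcont : ContinuousOn
      (fun r : ℝ => 1 / (r ^ 2 * n r) - 1 / (η r) ^ 2) (Set.Icc c r₀) := by
    apply ContinuousOn.sub
    · apply ContinuousOn.div continuousOn_const
        ((continuous_pow 2).continuousOn.mul hn.continuous.continuousOn)
      intro x hx
      have hx0 : 0 < x := lt_of_lt_of_le hcpos hx.1
      have := hnpos x
      exact (mul_pos (pow_pos hx0 2) this).ne'
    · apply ContinuousOn.div continuousOn_const (hηc.pow 2).continuousOn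
      intro x hx
      have hx0 : 0 < x := lt_of_lt_of_le hcpos hx.1
      have := hηpos x hx0
      exact (pow_pos this 2).ne'
  obtain ⟨C, hC⟩ := isCompact_Icc.exists_bound_of_continuousOn hcont
  refine ⟨max (|L| + 1) C, fun r hr => ?_⟩
  by_cases hrδ : r < δ
  · have hd : dist r 0 < δ := by
      rw [Real.dist_eq, sub_zero, abs_of_pos hr.1]; exact hrδ
    have habs : |1 / (r ^ 2 * n r) - 1 / (∫ σ in (0:ℝ)..r, Real.sqrt (n σ)) ^ 2| ≤ |L| + 1 := by
      have h2 := hδ hd hr.1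
      rw [Real.dist_eq] at h2
      have h3 := abs_sub_abs_le_abs_sub
        (1 / (r ^ 2 * n r) - 1 / (∫ σ in (0:ℝ)..r, Real.sqrt (n σ)) ^ 2) L
      linarith
    exact habs.trans (le_max_left _ _)
  · have hrc : r ∈ Set.Icc c r₀ := ⟨le_trans (min_le_left _ _) (not_lt.mp hrδ), hr.2⟩
    have := hC r hrc
    rw [Real.norm_eq_abs] at this
    exact this.trans (le_max_right _ _)
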